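/- Let G be a weighted bipartite graph with positive integral edge weights and let H be any subgraph of the unfolding φ(G). Define the refolding R(H) ⊆ G to consist of all weighted edges e=(u,v) of G such that (u^i, v^{w_e-i+1}) ∈ H for some i ∈ [w_e]. Then the maximum weight of a matching in R(H) is at least the maximum cardinality of a matching in H: μ_w(R(H)) ≥ μ(H). -/

import Mathlib

open scoped Classical BigOperators

noncomputable section

variable {V : Type*}

/-- A matching: a set of non-loop edges, pairwise vertex-disjoint. -/
def IsMatching (M : Finset (Sym2 V)) : Prop :=
  (∀ e ∈ M, ¬ e.IsDiag) ∧
    ∀ e ∈ M, ∀ f ∈ M, e ≠ f → ∀ v : V, v ∈ e → v ∉ f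

/-- μ(G): maximum cardinality of a matching contained in `G`. -/
def matchNum (G : Finset (Sym2 V)) : ℕ :=
  sSup {k | ∃ M : Finset (Sym2 V), M ⊆ G ∧ IsMatching M ∧ M.card = k}

/-- μ_w(G): maximum weight of a matching contained in `G` (ℕ-valued weights). -/
def matchWeight (G : Finset (Sym2 V)) (w : Sym2 V → ℕ) : ℕ :=
  sSup {s | ∃ M : Finset (Sym2 V), M ⊆ G ∧ IsMatching M ∧ ∑ e ∈ M, w e = s}

/-- μ_w(G): maximum weight of a matching contained in `G` (ℝ-valued weights). -/
def matchWeightR (G : Finset (Sym2 V)) (w : Sym2 V → ℝ) : ℝ :=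
  sSup {s | ∃ M : Finset (Sym2 V), M ⊆ G ∧ IsMatching M ∧ ∑ e ∈ M, w e = s}

/-- Degree of a vertex in an edge set. -/
def deg (H : Finset (Sym2 V)) (v : V) : ℕ := (H.filter fun e => v ∈ e).card

/-- The edge-degree deg_H(u) + deg_H(v) of an edge e = (u,v). -/
def degSum (H : Finset (Sym2 V)) (e : Sym2 V) : ℕ :=
  deg H e.out.1 + deg H e.out.2

/-- The unfolded copies of a weighted edge e = (u,v):
the edges (u^i, v^{w_e+1-i}) for i ∈ [w_e]. -/
def unfoldEdge (w : Sym2 V → ℕ) (e : Sym2 V) : Finset (Sym2 (V × ℕ)) :=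
  (Finset.Icc 1 (w e)).image fun i => s((e.out.1, i), (e.out.2, w e + 1 - i))

/-- The unfolding φ(G) of a weighted graph. -/
def unfoldGraph (G : Finset (Sym2 V)) (w : Sym2 V → ℕ) : Finset (Sym2 (V × ℕ)) :=
  G.biUnion (unfoldEdge w)

/-- The refolding R(H) ⊆ G of a subgraph H ⊆ φ(G): the weighted edges having
at least one unfolded copy in H. -/
def refold (G : Finset (Sym2 V)) (w : Sym2 V → ℕ)
    (H : Finset (Sym2 (V × ℕ))) : Finset (Sym2 V) :=
  G.filter fun e => ∃ f ∈ unfoldEdge w e, f ∈ H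

/-- A bipartite edge set: some side `A` of a bipartition meets every edge exactly once. -/
def IsBipartite (G : Finset (Sym2 V)) : Prop :=
  ∃ A : Set V, ∀ e ∈ G, ∃ u v, e = s(u, v) ∧ u ∈ A ∧ v ∉ A

/-!
Let `y` be a minimum integral weighted vertex cover of the bipartite graph `R = R(H)`, i.e.
`w(uv) ≤ y u + y v` on its edges. Each unfolded copy `(u^i, v^{w+1-i})` of an edge of `R` has
`i ≤ y u` or `w+1-i ≤ y v`, so it meets one of the `∑ y` vertices `x^j` with `1 ≤ j ≤ y x`;
hence a matching of `H ⊆ φ(R)` has at most `∑ y` edges. Conversely (Egerváry), minimality of `y`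
gives Hall's condition for matching the vertices with `y ≠ 0` of either side along tight edges,
and the two injections combine (Mendelsohn–Dulmage) into a matching of tight edges covering all
of them, whose weight is therefore at least `∑ y`.
-/

open Finset

def IsBipartiteWith (R : Finset (Sym2 V)) (A : Set V) : Prop :=
  ∀ ⦃u v : V⦄, s(u, v) ∈ R → (u ∈ A ↔ v ∉ A)

def IsWeightCover (R : Finset (Sym2 V)) (w : Sym2 V → ℕ) (y : V → ℕ) : Prop :=
  ∀ ⦃u v : V⦄, s(u, v) ∈ R → w s(u, v) ≤ y u + y v

def verts (R : Finset (Sym2 V)) : Finset V := R.biUnion Sym2.toFinset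

lemma mem_verts {R : Finset (Sym2 V)} {e : Sym2 V} {x : V} (he : e ∈ R) (hx : x ∈ e) :
    x ∈ verts R :=
  mem_biUnion.2 ⟨e, he, Sym2.mem_toFinset.2 hx⟩

lemma IsBipartite.exists_isBipartiteWith {G : Finset (Sym2 V)} (hG : IsBipartite G) :
    ∃ A, IsBipartiteWith G A := by
  obtain ⟨A, hA⟩ := hG
  refine ⟨A, fun u v huv => ?_⟩
  obtain ⟨p, q, he, hp, hq⟩ := hA _ huv
  rcases Sym2.eq_iff.1 he with ⟨rfl, rfl⟩ | ⟨rfl, rfl⟩ <;> tauto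

namespace IsBipartiteWith

variable {R : Finset (Sym2 V)} {A : Set V}

lemma mono {R' : Finset (Sym2 V)} (hR : IsBipartiteWith R A) (h : R' ⊆ R) :
    IsBipartiteWith R' A :=
  fun _ _ huv => hR (h huv)

lemma compl (hR : IsBipartiteWith R A) : IsBipartiteWith R Aᶜ := by
  intro u v huv
  have := hR huv
  simp only [Set.mem_compl_iff]
  tauto

lemma isWeightCover_of_forall_mem_left {w : Sym2 V → ℕ} {z : V → ℕ} (hR : IsBipartiteWith R A)
    (h : ∀ ⦃u v : V⦄, s(u, v) ∈ R → u ∈ A → w s(u, v) ≤ z u + z v) : IsWeightCover R w z := by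
  intro u v huv
  by_cases hu : u ∈ A
  · exact h huv hu
  · have hvu : s(v, u) ∈ R := Sym2.eq_swap ▸ huv
    rw [Sym2.eq_swap, add_comm]
    exact h hvu (not_not.1 ((not_congr (hR huv)).1 hu))

end IsBipartiteWith

namespace IsMatching

lemma insert {N : Finset (Sym2 V)} {e : Sym2 V} (hN : IsMatching N) (he : ¬ e.IsDiag)
    (hdisj : ∀ f ∈ N, ∀ v ∈ e, v ∉ f) : IsMatching (insert e N) := by
  refine ⟨fun f hf => ?_, fun f hf g hg hfg v hvf hvg => ?_⟩
  · rcases mem_insert.1 hf with rfl | hf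
    exacts [he, hN.1 f hf]
  · rcases mem_insert.1 hf with rfl | hfN <;> rcases mem_insert.1 hg with rfl | hgN
    · exact hfg rfl
    · exact hdisj g hgN v hvf hvg
    · exact hdisj f hfN v hvg hvf
    · exact hN.2 f hfN g hgN hfg v hvf hvg

lemma card_le_card_of_forall_exists_mem {M : Finset (Sym2 V)} (hM : IsMatching M) {T : Finset V}
    (h : ∀ e ∈ M, ∃ x ∈ T, x ∈ e) : #M ≤ #T :=
  card_le_card_of_forall_subsingleton (fun e x => x ∈ e) h fun x _ e he f hf => by
    by_contra hef
    exact hM.2 e he.1 f hf.1 hef x he.2 hf.2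

lemma sum_verts {N : Finset (Sym2 V)} (hN : IsMatching N) (g : V → ℕ) :
    ∑ x ∈ verts N, g x = ∑ f ∈ N, ∑ x ∈ f.toFinset, g x :=
  sum_biUnion fun e he f hf hef => disjoint_left.2 fun x hxe hxf =>
    hN.2 e he f hf hef x (Sym2.mem_toFinset.1 hxe) (Sym2.mem_toFinset.1 hxf)

end IsMatching

lemma matchNum_le {H : Finset (Sym2 V)} {k : ℕ} (h : ∀ M ⊆ H, IsMatching M → #M ≤ k) :
    matchNum H ≤ k :=
  csSup_le ⟨0, ∅, empty_subset _, by simp [IsMatching], rfl⟩ <| by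
    rintro _ ⟨M, hMH, hM, rfl⟩
    exact h M hMH hM

lemma sum_le_matchWeight {G N : Finset (Sym2 V)} (w : Sym2 V → ℕ) (hNG : N ⊆ G)
    (hN : IsMatching N) : ∑ e ∈ N, w e ≤ matchWeight G w :=
  le_csSup ⟨∑ e ∈ G, w e, by rintro _ ⟨M, hMG, -, rfl⟩; exact sum_le_sum_of_subset hMG⟩
    ⟨N, hNG, hN, rfl⟩

lemma subset_unfoldGraph_refold {G : Finset (Sym2 V)} {w : Sym2 V → ℕ}
    {H : Finset (Sym2 (V × ℕ))} (hH : H ⊆ unfoldGraph G w) :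
    H ⊆ unfoldGraph (refold G w H) w := by
  intro f hf
  obtain ⟨e, he, hfe⟩ := mem_biUnion.1 (hH hf)
  exact mem_biUnion.2 ⟨e, mem_filter.2 ⟨he, f, hfe, hf⟩, hfe⟩

lemma exists_mem_Icc_mem_of_mem_unfoldEdge {w : Sym2 V → ℕ} {y : V → ℕ} {e : Sym2 V}
    {f : Sym2 (V × ℕ)} (hy : w e ≤ y e.out.1 + y e.out.2) (hf : f ∈ unfoldEdge w e) :
    ∃ x ∈ e, ∃ i ∈ Icc 1 (y x), (x, i) ∈ f := by
  obtain ⟨i, hi, rfl⟩ := mem_image.1 hf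
  rw [mem_Icc] at hi
  by_cases hiy : i ≤ y e.out.1
  · exact ⟨_, e.out_fst_mem, i, mem_Icc.2 ⟨hi.1, hiy⟩, Sym2.mem_mk_left _ _⟩
  · exact ⟨_, e.out_snd_mem, w e + 1 - i, mem_Icc.2 ⟨by omega, by omega⟩, Sym2.mem_mk_right _ _⟩

lemma card_biUnion_singleton_product_Icc (S : Finset V) (n : V → ℕ) :
    #(S.biUnion fun x => {x} ×ˢ Icc 1 (n x)) = ∑ x ∈ S, n x := by
  rw [card_biUnion]
  · simp
  · intro a _ b _ hab
    simp only [Function.onFun, disjoint_left, mem_product, mem_singleton]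
    exact fun p hpa hpb => hab (hpa.1.symm.trans hpb.1)

theorem card_le_sum_of_isWeightCover {R : Finset (Sym2 V)} {w : Sym2 V → ℕ} {y : V → ℕ}
    (hy : IsWeightCover R w y) {M : Finset (Sym2 (V × ℕ))} (hM : IsMatching M)
    (hMR : M ⊆ unfoldGraph R w) : #M ≤ ∑ x ∈ verts R, y x := by
  rw [← card_biUnion_singleton_product_Icc]
  refine hM.card_le_card_of_forall_exists_mem fun f hf => ?_
  obtain ⟨e, he, hfe⟩ := mem_biUnion.1 (hMR hf)
  have hye : w e ≤ y e.out.1 + y e.out.2 := by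
    have hout : s(e.out.1, e.out.2) = e := Quot.out_eq e
    simpa only [hout] using @hy e.out.1 e.out.2 (by rwa [hout])
  obtain ⟨x, hxe, i, hi, hxf⟩ := exists_mem_Icc_mem_of_mem_unfoldEdge hye hfe
  exact ⟨(x, i), mem_biUnion.2 ⟨x, mem_verts he hxe, by simpa using hi⟩, hxf⟩

lemma exists_isWeightCover_minimal (R : Finset (Sym2 V)) (w : Sym2 V → ℕ) :
    ∃ y, IsWeightCover R w y ∧
      ∀ z, IsWeightCover R w z → ∑ x ∈ verts R, y x ≤ ∑ x ∈ verts R, z x := by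
  have hconst : IsWeightCover R w fun _ => R.sup w :=
    fun _ _ huv => (le_sup huv).trans (Nat.le_add_right _ _)
  let total : (V → ℕ) → ℕ := fun y => ∑ x ∈ verts R, y x
  exact ⟨_, Function.argminOn_mem total {y | IsWeightCover R w y} ⟨_, hconst⟩,
    fun z hz => Function.argminOn_le total {y | IsWeightCover R w y} hz⟩

-- Only meaningful where `y ≠ 0` on `S`; elsewhere the truncated subtraction bites.
def coverShift (y : V → ℕ) (S T : Finset V) (x : V) : ℕ :=
  y x + (if x ∈ T then 1 else 0) - (if x ∈ S then 1 else 0)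

lemma sum_coverShift_add_card {y : V → ℕ} {U S T : Finset V} (hSU : S ⊆ U) (hTU : T ⊆ U)
    (hS : ∀ x ∈ S, y x ≠ 0) :
    ∑ x ∈ U, coverShift y S T x + #S = ∑ x ∈ U, y x + #T := by
  have hpoint : ∀ x, coverShift y S T x + (if x ∈ S then 1 else 0) =
      y x + (if x ∈ T then 1 else 0) := by
    intro x
    unfold coverShift
    by_cases hx : x ∈ S
    · have := hS x hx
      split_ifs <;> omega
    · split_ifs <;> omega
  have hcard : ∀ S' ⊆ U, ∑ x ∈ U, (if x ∈ S' then 1 else 0) = #S' := fun S' hS' => by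
    rw [sum_boole, Nat.cast_id, filter_mem_eq_inter, inter_eq_right.2 hS']
  rw [← hcard S hSU, ← hcard T hTU, ← sum_add_distrib, ← sum_add_distrib]
  exact sum_congr rfl fun x _ => hpoint x

lemma IsWeightCover.coverShift {R : Finset (Sym2 V)} {w : Sym2 V → ℕ} {y : V → ℕ} {A : Set V}
    (hy : IsWeightCover R w y) (hR : IsBipartiteWith R A) {S T : Finset V}
    (hSA : ∀ x ∈ S, x ∈ A)
    (hT : ∀ ⦃u v : V⦄, u ∈ S → s(u, v) ∈ R → y u + y v ≤ w s(u, v) → v ∈ T) :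
    IsWeightCover R w (coverShift y S T) := by
  refine hR.isWeightCover_of_forall_mem_left fun u v huv hu => ?_
  have hvS : v ∉ S := fun hv => (hR huv).1 hu (hSA v hv)
  have hcov := hy huv
  unfold _root_.coverShift
  by_cases huS : u ∈ S
  · by_cases htight : y u + y v ≤ w s(u, v)
    · have hvT := hT huS huv htight
      split_ifs <;> omega
    · split_ifs <;> omega
  · split_ifs <;> omega

lemma exists_injOn_mem_of_card_le_card_biUnion {P : Finset V} (t : V → Finset V)
    (h : ∀ S ⊆ P, #S ≤ #(S.biUnion t)) : ∃ σ : V → V, Set.InjOn σ P ∧ ∀ x ∈ P, σ x ∈ t x := by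
  obtain ⟨f, hfinj, hft⟩ :=
    (all_card_le_biUnion_card_iff_exists_injective fun x : P => t x).1 fun S => by
      simpa [card_image_of_injective _ Subtype.val_injective, image_biUnion] using
        h (S.image Subtype.val) fun x hx => by
          obtain ⟨x, -, rfl⟩ := mem_image.1 hx
          exact x.2
  refine ⟨fun x => if hx : x ∈ P then f ⟨x, hx⟩ else x, fun a ha b hb hab => ?_, fun x hx => ?_⟩
  · simp only [mem_coe] at ha hb
    simp only [dif_pos ha, dif_pos hb] at hab
    exact congrArg Subtype.val (hfinj hab)
  · simpa only [dif_pos hx] using hft ⟨x, hx⟩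

lemma exists_injOn_tight {R : Finset (Sym2 V)} {w : Sym2 V → ℕ} {y : V → ℕ} {A : Set V}
    (hR : IsBipartiteWith R A) (hy : IsWeightCover R w y)
    (hmin : ∀ z, IsWeightCover R w z → ∑ x ∈ verts R, y x ≤ ∑ x ∈ verts R, z x)
    {P : Finset V} (hP : ∀ x ∈ P, x ∈ verts R ∧ x ∈ A ∧ y x ≠ 0) :
    ∃ σ : V → V, Set.InjOn σ P ∧ ∀ x ∈ P, s(x, σ x) ∈ R ∧ y x + y (σ x) = w s(x, σ x) := by
  let tight : V → Finset V := fun u => {v ∈ verts R | s(u, v) ∈ R ∧ y u + y v ≤ w s(u, v)}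
  -- If Hall's condition failed for `S`, moving one unit of `y` from `S` to its tight
  -- neighbourhood would give a cheaper cover.
  obtain ⟨σ, hσinj, hσ⟩ := exists_injOn_mem_of_card_le_card_biUnion tight fun S hSP => by
    by_contra! hlt
    have hcover := hy.coverShift hR (S := S) (T := S.biUnion tight)
      (fun x hx => (hP x (hSP hx)).2.1) fun u v hu huv htight =>
        mem_biUnion.2 ⟨u, hu, mem_filter.2 ⟨mem_verts huv (Sym2.mem_mk_right u v), huv, htight⟩⟩
    have hsum := sum_coverShift_add_card (y := y) (T := S.biUnion tight)
      (fun x hx => (hP x (hSP hx)).1) (biUnion_subset.2 fun u _ => filter_subset _ _)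
      fun x hx => (hP x (hSP hx)).2.2
    have := hmin _ hcover
    omega
  refine ⟨σ, hσinj, fun x hx => ?_⟩
  obtain ⟨-, hxR, hle⟩ := mem_filter.1 (hσ x hx)
  exact ⟨hxR, le_antisymm hle (hy hxR)⟩

lemma exists_isMatching_of_injOn (A : Set V) (U : Finset V) {τ : V → V}
    (hτA : ∀ x ∈ U, x ∈ A ↔ τ x ∉ A) (hτ : Set.InjOn τ U) :
    ∃ N : Finset (Sym2 V), IsMatching N ∧ (∀ f ∈ N, ∃ x ∈ U, f = s(x, τ x)) ∧
      ∀ x ∈ U, ∃ f ∈ N, x ∈ f := by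
  induction U using Finset.strongInduction with
  | H U ih =>
  by_cases hsrc : ∃ x ∈ U, ∀ x' ∈ U, τ x' ≠ x
  · obtain ⟨x, hxU, hx⟩ := hsrc
    set U' := (U.erase x).erase (τ x)
    have hU'U : U' ⊆ U := (erase_subset _ _).trans (erase_subset _ _)
    obtain ⟨N, hN, hNU, hcov⟩ := ih U' ((erase_subset _ _).trans_ssubset (erase_ssubset hxU))
      (fun x' hx' => hτA x' (hU'U hx')) (hτ.mono hU'U)
    refine ⟨insert s(x, τ x) N, hN.insert ?_ ?_, ?_, ?_⟩
    · exact Sym2.mk_isDiag_iff.not.2 fun h => hx x hxU h.symm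
    · intro f hf v hv hvf
      obtain ⟨x', hx', rfl⟩ := hNU f hf
      have hx'x : x' ≠ x := ne_of_mem_erase (mem_of_mem_erase hx')
      have hx'τ : x' ≠ τ x := ne_of_mem_erase hx'
      rcases Sym2.mem_iff.1 hv with rfl | rfl <;> rcases Sym2.mem_iff.1 hvf with h | h
      · exact hx'x h.symm
      · exact hx x' (hU'U hx') h.symm
      · exact hx'τ h.symm
      · exact hx'x (hτ (hU'U hx') hxU h.symm)
    · intro f hf
      rcases mem_insert.1 hf with rfl | hf
      · exact ⟨x, hxU, rfl⟩
      · obtain ⟨x', hx', rfl⟩ := hNU f hf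
        exact ⟨x', hU'U hx', rfl⟩
    · intro v hv
      by_cases hvx : v = x ∨ v = τ x
      · exact ⟨_, mem_insert_self _ _, Sym2.mem_iff.2 hvx⟩
      · push Not at hvx
        obtain ⟨f, hf, hvf⟩ := hcov v (mem_erase.2 ⟨hvx.2, mem_erase.2 ⟨hvx.1, hv⟩⟩)
        exact ⟨f, mem_insert_of_mem hf, hvf⟩
  · push Not at hsrc
    have hside : ∀ x ∈ U, x ∈ A → x ≠ τ x := fun x hx hxA h => (hτA x hx).1 hxA (h ▸ hxA)
    refine ⟨{x ∈ U | x ∈ A}.image fun x => s(x, τ x), ⟨?_, ?_⟩, ?_, ?_⟩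
    · simp only [mem_image, mem_filter]
      rintro _ ⟨x, ⟨hx, hxA⟩, rfl⟩
      exact Sym2.mk_isDiag_iff.not.2 (hside x hx hxA)
    · simp only [mem_image, mem_filter]
      rintro _ ⟨a, ⟨ha, haA⟩, rfl⟩ _ ⟨b, ⟨hb, hbA⟩, rfl⟩ hab v hva hvb
      have hτa := (hτA a ha).1 haA
      have hτb := (hτA b hb).1 hbA
      rcases Sym2.mem_iff.1 hva with rfl | rfl <;> rcases Sym2.mem_iff.1 hvb with h | h
      · exact hab (by rw [h])
      · exact hτb (h ▸ haA)
      · exact hτa (h ▸ hbA)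
      · exact hab (by rw [hτ ha hb h])
    · simp only [mem_image, mem_filter]
      rintro _ ⟨x, ⟨hx, -⟩, rfl⟩
      exact ⟨x, hx, rfl⟩
    · intro v hv
      by_cases hvA : v ∈ A
      · exact ⟨_, mem_image_of_mem _ (mem_filter.2 ⟨hv, hvA⟩), Sym2.mem_mk_left _ _⟩
      · obtain ⟨x, hx, rfl⟩ := hsrc v hv
        have hxA : x ∈ A := (hτA x hx).2 hvA
        exact ⟨_, mem_image_of_mem _ (mem_filter.2 ⟨hx, hxA⟩), Sym2.mem_mk_right _ _⟩

theorem exists_isWeightCover_sum_le_isMatching {R : Finset (Sym2 V)} {A : Set V}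
    (hR : IsBipartiteWith R A) (w : Sym2 V → ℕ) :
    ∃ y, IsWeightCover R w y ∧ ∃ N ⊆ R, IsMatching N ∧ ∑ x ∈ verts R, y x ≤ ∑ e ∈ N, w e := by
  obtain ⟨y, hy, hmin⟩ := exists_isWeightCover_minimal R w
  obtain ⟨σ, hσinj, hσ⟩ := exists_injOn_tight hR hy hmin
    (P := {x ∈ verts R | x ∈ A ∧ y x ≠ 0}) fun x hx => mem_filter.1 hx
  obtain ⟨ρ, hρinj, hρ⟩ := exists_injOn_tight hR.compl hy hmin
    (P := {x ∈ verts R | x ∈ Aᶜ ∧ y x ≠ 0}) fun x hx => mem_filter.1 hx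
  set U := {x ∈ verts R | y x ≠ 0}
  let τ : V → V := fun x => if x ∈ A then σ x else ρ x
  have hτ : ∀ x ∈ U, s(x, τ x) ∈ R ∧ y x + y (τ x) = w s(x, τ x) := by
    intro x hx
    obtain ⟨hxR, hx0⟩ := mem_filter.1 hx
    by_cases hxA : x ∈ A
    · simpa [τ, hxA] using hσ x (mem_filter.2 ⟨hxR, hxA, hx0⟩)
    · simpa [τ, hxA] using hρ x (mem_filter.2 ⟨hxR, hxA, hx0⟩)
  have hτA : ∀ x ∈ U, x ∈ A ↔ τ x ∉ A := fun x hx => hR (hτ x hx).1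
  have hτinj : Set.InjOn τ U := by
    intro a ha b hb hab
    have hsame : a ∈ A ↔ b ∈ A := by rw [hτA a ha, hτA b hb, hab]
    obtain ⟨haR, ha0⟩ := mem_filter.1 ha
    obtain ⟨hbR, hb0⟩ := mem_filter.1 hb
    by_cases haA : a ∈ A
    · have hbA := hsame.1 haA
      simp only [τ, haA, hbA, if_true] at hab
      exact hσinj (mem_filter.2 ⟨haR, haA, ha0⟩) (mem_filter.2 ⟨hbR, hbA, hb0⟩) hab
    · have hbA := (not_congr hsame).1 haA
      simp only [τ, haA, hbA, if_false] at hab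
      exact hρinj (mem_filter.2 ⟨haR, haA, ha0⟩) (mem_filter.2 ⟨hbR, hbA, hb0⟩) hab
  obtain ⟨N, hN, hNU, hcov⟩ := exists_isMatching_of_injOn A U hτA hτinj
  have hNtight : ∀ f ∈ N, f ∈ R ∧ ∑ x ∈ f.toFinset, y x = w f := by
    intro f hf
    obtain ⟨x, hx, rfl⟩ := hNU f hf
    have hne : x ≠ τ x := fun h => by have := hτA x hx; rw [← h] at this; tauto
    rw [Sym2.toFinset_mk_eq, sum_pair hne]
    exact hτ x hx
  refine ⟨y, hy, N, fun f hf => (hNtight f hf).1, hN, ?_⟩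
  calc ∑ x ∈ verts R, y x = ∑ x ∈ U, y x := (sum_filter_ne_zero _).symm
    _ ≤ ∑ x ∈ verts N, y x := sum_le_sum_of_subset fun x hx => by
        obtain ⟨f, hf, hxf⟩ := hcov x hx
        exact mem_verts hf hxf
    _ = ∑ f ∈ N, ∑ x ∈ f.toFinset, y x := hN.sum_verts y
    _ = ∑ f ∈ N, w f := sum_congr rfl fun f hf => (hNtight f hf).2

theorem refolding_preserves_matching_general
    (G : Finset (Sym2 V)) (w : Sym2 V → ℕ)
    (hbip : IsBipartite G)
    (H : Finset (Sym2 (V × ℕ))) (hH : H ⊆ unfoldGraph G w) :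
    matchNum H ≤ matchWeight (refold G w H) w := by
  obtain ⟨A, hA⟩ := hbip.exists_isBipartiteWith
  obtain ⟨y, hy, N, hNR, hN, hyN⟩ :=
    exists_isWeightCover_sum_le_isMatching (hA.mono (filter_subset _ _ : refold G w H ⊆ G)) w
  refine matchNum_le fun M hMH hM => ?_
  calc #M ≤ ∑ x ∈ verts (refold G w H), y x :=
        card_le_sum_of_isWeightCover hy hM (hMH.trans (subset_unfoldGraph_refold hH))
    _ ≤ ∑ e ∈ N, w e := hyN
    _ ≤ matchWeight (refold G w H) w := sum_le_matchWeight w hNR hN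

/-- For a weighted bipartite graph `G` with positive integral weights and
any subgraph `H` of the unfolding φ(G), the maximum matching weight of the refolding
R(H) is at least the maximum matching cardinality of `H`. -/
theorem refolding_preserves_matching
    (G : Finset (Sym2 V)) (w : Sym2 V → ℕ)
    (hG : ∀ e ∈ G, ¬ e.IsDiag) (hpos : ∀ e ∈ G, 0 < w e)
    (hbip : IsBipartite G)
    (H : Finset (Sym2 (V × ℕ))) (hH : H ⊆ unfoldGraph G w) :
    matchNum H ≤ matchWeight (refold G w H) w :=
  refolding_preserves_matching_general G w hbip H hH
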